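/- arXiv:1905.02808 — 2 statements merged into one kernel-verified Lean document; each statement's English description precedes it below -/
import Mathlib

section
/- (Darboux transformation of Riccati equations for the Bessel case) Let μ : ℝ → ℝ satisfy μ' = -2μ, let β : ℝ, and let f be a differentiable solution of f' + f² = β² + μ with f(t) + β ≠ 0 for all t. Define β̂ = β + 1 and f̂ = μ/(f + β) + β̂. Then f̂ is differentiable and satisfies f̂' + f̂² = β̂² + μ. -/
/-! With `g = f + β` the Riccati equation for `f` reads `g' = μ + 2βg - g²`, so by `μ' = -2μ` and
the quotient rule `(μ/g)' = μ - μ²/g² - 2(β + 1)μ/g`. The last two terms cancel the square and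
cross terms of `(μ/g + β + 1)²`, leaving `(β + 1)² + μ`. -/

theorem hasDerivAt_darboux_riccati {μ f : ℝ → ℝ} {β t : ℝ}
    (hμ : HasDerivAt μ (-2 * μ t) t) (hf : HasDerivAt f (β ^ 2 + μ t - f t ^ 2) t)
    (hden : f t + β ≠ 0) :
    HasDerivAt (fun s ↦ μ s / (f s + β) + (β + 1))
      ((β + 1) ^ 2 + μ t - (μ t / (f t + β) + (β + 1)) ^ 2) t := by
  refine ((hμ.div (hf.add_const β) hden).add_const (β + 1)).congr_deriv ?_
  field_simp
  ring

/-- Darboux transformation of Riccati equations for the Bessel case. -/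
theorem riccati_darboux_transform
    (μ f : ℝ → ℝ) (β : ℝ)
    (hμ : Differentiable ℝ μ) (hμeq : ∀ t, deriv μ t = -2 * μ t)
    (hf : Differentiable ℝ f)
    (hfeq : ∀ t, deriv f t + (f t) ^ 2 = β ^ 2 + μ t)
    (hden : ∀ t, f t + β ≠ 0)
    (βh : ℝ) (hβh : βh = β + 1)
    (fh : ℝ → ℝ) (hfh : ∀ t, fh t = μ t / (f t + β) + βh) :
    Differentiable ℝ fh ∧ ∀ t, deriv fh t + (fh t) ^ 2 = βh ^ 2 + μ t := by
  obtain rfl : fh = fun s ↦ μ s / (f s + β) + (β + 1) := funext fun s ↦ hβh ▸ hfh s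
  subst hβh
  have hderiv : ∀ t, HasDerivAt (fun s ↦ μ s / (f s + β) + (β + 1))
      ((β + 1) ^ 2 + μ t - (μ t / (f t + β) + (β + 1)) ^ 2) t := fun t ↦
    hasDerivAt_darboux_riccati (hμeq t ▸ (hμ t).hasDerivAt)
      ((eq_sub_of_add_eq (hfeq t)) ▸ (hf t).hasDerivAt) (hden t)
  exact ⟨fun t ↦ (hderiv t).differentiableAt, fun t ↦ by rw [(hderiv t).deriv]; ring⟩
end

section
/- If f and f̂ are differentiable functions with f + β and f̂ - β̂ nowhere zero, satisfying (f(t) + β)(f̂(t) - β̂) = e^{-2t} for all t with β̂ = β + 1, then f satisfies f' + f² = β² + e^{-2t} if and only if f̂ satisfies f̂' + f̂² = β̂² + e^{-2t}. -/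
/-!
With `u = f + β` and `v = f̂ - β̂`, differentiating `u v = e^{-2t}` gives
`f' v + u f̂' = -2 u v`. Substituting this and `u v = e^{-2t}` shows that the Riccati
residuals `R = f' + f² - β² - e^{-2t}` and `R̂ = f̂' + f̂² - β̂² - e^{-2t}` satisfy
`v R + u R̂ = u v (β̂ - β - 1) = 0`; as `u` and `v` never vanish, `R t = 0 ↔ R̂ t = 0`.
-/

open Real

noncomputable section

namespace Riccati

def residual (f : ℝ → ℝ) (c t : ℝ) : ℝ :=
  deriv f t + f t ^ 2 - c ^ 2 - exp (-2 * t)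

theorem residual_eq_zero_iff {f : ℝ → ℝ} {c t : ℝ} :
    residual f c t = 0 ↔ deriv f t + f t ^ 2 = c ^ 2 + exp (-2 * t) := by
  unfold residual
  constructor <;> intro h <;> linarith

variable {f fh : ℝ → ℝ} {β βh t : ℝ}

theorem deriv_mul_add_mul_deriv_eq (hf : DifferentiableAt ℝ f t)
    (hfh : DifferentiableAt ℝ fh t)
    (hrel : ∀ s, (f s + β) * (fh s - βh) = exp (-2 * s)) :
    deriv f t * (fh t - βh) + (f t + β) * deriv fh t = -2 * exp (-2 * t) := by
  have hprod : HasDerivAt (fun s => (f s + β) * (fh s - βh))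
      (deriv f t * (fh t - βh) + (f t + β) * deriv fh t) t :=
    (hf.hasDerivAt.add_const β).mul (hfh.hasDerivAt.sub_const βh)
  have hexp : HasDerivAt (fun s => exp (-2 * s)) (-2 * exp (-2 * t)) t := by
    simpa [mul_comm] using ((hasDerivAt_id t).const_mul (-2 : ℝ)).exp
  rw [funext hrel] at hprod
  exact hprod.unique hexp

theorem mul_residual_add_mul_residual_eq_zero (hf : DifferentiableAt ℝ f t)
    (hfh : DifferentiableAt ℝ fh t)
    (hrel : ∀ s, (f s + β) * (fh s - (β + 1)) = exp (-2 * s)) :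
    (fh t - (β + 1)) * residual f β t + (f t + β) * residual fh (β + 1) t = 0 := by
  unfold residual
  linear_combination deriv_mul_add_mul_deriv_eq hf hfh hrel + (1 + f t + fh t) * hrel t

theorem residual_eq_zero_iff_residual_eq_zero (hf : DifferentiableAt ℝ f t)
    (hfh : DifferentiableAt ℝ fh t) (hu : f t + β ≠ 0) (hv : fh t - (β + 1) ≠ 0)
    (hrel : ∀ s, (f s + β) * (fh s - (β + 1)) = exp (-2 * s)) :
    residual f β t = 0 ↔ residual fh (β + 1) t = 0 := by
  have hsum := mul_residual_add_mul_residual_eq_zero hf hfh hrel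
  constructor <;> intro h
  · simpa [h, hu] using hsum
  · simpa [h, hv] using hsum

end Riccati

end

open Riccati in
/-- Equivalence of the two Riccati equations related by
`(f + β)(f̂ - β̂) = e^{-2t}`, `β̂ = β + 1`. -/
theorem riccati_equivalence
    (f fh : ℝ → ℝ) (β βh : ℝ) (hβh : βh = β + 1)
    (hf : Differentiable ℝ f) (hfh : Differentiable ℝ fh)
    (hden1 : ∀ t, f t + β ≠ 0) (hden2 : ∀ t, fh t - βh ≠ 0)
    (hrel : ∀ t, (f t + β) * (fh t - βh) = Real.exp (-2 * t)) :
    (∀ t, deriv f t + (f t) ^ 2 = β ^ 2 + Real.exp (-2 * t)) ↔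
    (∀ t, deriv fh t + (fh t) ^ 2 = βh ^ 2 + Real.exp (-2 * t)) := by
  subst hβh
  simp only [← residual_eq_zero_iff]
  exact forall_congr' fun t =>
    residual_eq_zero_iff_residual_eq_zero (hf t) (hfh t) (hden1 t) (hden2 t) hrel
end
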